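/- The theory T_2n is smooth: for every quantifier-free Σ_P-formula φ, every model A of T_2n with a valuation satisfying φ, and every cardinal κ ≥ |A|, there is a model B of T_2n with a valuation satisfying φ such that |B| = κ. -/

import Mathlib

open FirstOrder FirstOrder.Language

/-- The signature Σ_P with a single unary predicate symbol `P`. -/
def LP : FirstOrder.Language :=
  ⟨fun _ => Empty, fun n => match n with | 1 => Unit | _ => Empty⟩

/-- The unary predicate symbol of `LP`. -/
def PSymb : LP.Relations 1 := Unit.unit

/-- The interpretation of the predicate symbol `P` in an `LP`-structure. -/
def PPred (M : Type) (inst : LP.Structure M) (a : M) : Prop :=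
  inst.RelMap PSymb ![a]

/-- Realization of a formula, with the structure instance given explicitly. -/
def RealizeP {α : Type} (M : Type) (inst : LP.Structure M) (φ : LP.Formula α) (v : α → M) : Prop :=
  letI := inst
  φ.Realize v

/-- `M` is a model of T_2n, axiomatized by `{ψ_n^P → ψ_{≥2n} : n ≥ 1}`: if there are at
least `n` distinct elements satisfying `P`, then there are at least `2n` elements. -/
def ModelT2n (M : Type) (inst : LP.Structure M) : Prop :=
  ∀ n : ℕ, 1 ≤ n →
    (∃ x : Fin n → M, Function.Injective x ∧ ∀ i, PPred M inst (x i)) →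
    ∃ y : Fin (2 * n) → M, Function.Injective y

/-! Pad `M` with new elements outside `P`. The axioms of T_2n only bound the size from below in
terms of the number of `P`-elements, which stays the same, so the padded structure is still a
model; and `M` embeds into it, so quantifier-free formulas keep their truth values. -/

namespace ModelT2n

theorem of_injective {M N : Type} {instM : LP.Structure M} {instN : LP.Structure N}
    (hM : ModelT2n M instM) {f : M → N} (hf : Function.Injective f)
    (hP : ∀ b, PPred N instN b → ∃ a, f a = b ∧ PPred M instM a) :
    ModelT2n N instN := by
  rintro n hn ⟨x, hx_inj, hxP⟩
  choose a hfa haP using fun i => hP (x i) (hxP i)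
  have ha_inj : Function.Injective a := fun i j hij => hx_inj (by rw [← hfa i, ← hfa j, hij])
  obtain ⟨y, hy_inj⟩ := hM n hn ⟨a, ha_inj, haP⟩
  exact ⟨f ∘ y, hf.comp hy_inj⟩

end ModelT2n

section Padding

variable (M : Type) (instM : LP.Structure M) (X : Type)

abbrev sumStructure : LP.Structure (M ⊕ X) where
  funMap := fun {_} f _ => Empty.elim f
  RelMap := fun {n} r x =>
    match n, r, x with
    | 1, _, x => ∃ m : M, x 0 = Sum.inl m ∧ PPred M instM m

theorem pPred_sumStructure (a : M ⊕ X) :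
    PPred (M ⊕ X) (sumStructure M instM X) a ↔ ∃ m, a = Sum.inl m ∧ PPred M instM m :=
  Iff.rfl

theorem ModelT2n.sumStructure (hM : ModelT2n M instM) :
    ModelT2n (M ⊕ X) (sumStructure M instM X) :=
  hM.of_injective Sum.inl_injective fun b hb => by
    obtain ⟨m, rfl, hm⟩ := (pPred_sumStructure M instM X b).mp hb
    exact ⟨m, rfl, hm⟩

def inlEmbedding : letI := instM; letI := sumStructure M instM X; M ↪[LP] (M ⊕ X) :=
  letI := instM
  letI := sumStructure M instM X
  { toFun := Sum.inl
    inj' := Sum.inl_injective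
    map_fun' := fun {_} f _ => Empty.elim f
    map_rel' := fun {n} r x =>
      match n, r with
      | 1, _ => by
        have hx : x = ![x 0] := by ext i; fin_cases i; rfl
        show (∃ m, Sum.inl (x 0) = Sum.inl m ∧ PPred M instM m) ↔ _
        rw [hx]
        exact ⟨fun ⟨_, hm, hP⟩ => by cases Sum.inl_injective hm; exact hP, fun h => ⟨_, rfl, h⟩⟩ }

end Padding

theorem realizeP_comp_embedding {M N α : Type} {instM : LP.Structure M} {instN : LP.Structure N}
    (e : letI := instM; letI := instN; M ↪[LP] N) {φ : LP.Formula α} (hφ : φ.IsQF)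
    {v : α → M} (hv : RealizeP M instM φ v) : RealizeP N instN φ (e ∘ v) := by
  let := instM
  let := instN
  have h := (hφ.realize_embedding e (xs := default)).mpr hv
  rwa [Unique.eq_default (e ∘ default)] at h

/-- The theory T_2n is smooth: for every quantifier-free formula φ, model of T_2n with a
valuation satisfying φ, and cardinal κ at least the size of the model, there is a model
of T_2n of size exactly κ with a valuation satisfying φ. -/
theorem stmt_8 (α : Type) (φ : LP.Formula α) (hφ : φ.IsQF)
    (M : Type) (instM : LP.Structure M) (hM : ModelT2n M instM)
    (v : α → M) (hv : RealizeP M instM φ v)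
    (κ : Cardinal) (hκ : Cardinal.mk M ≤ κ) :
    ∃ (N : Type) (instN : LP.Structure N), ModelT2n N instN ∧ Cardinal.mk N = κ ∧
      ∃ w : α → N, RealizeP N instN φ w := by
  obtain ⟨c, rfl⟩ := exists_add_of_le hκ
  exact ⟨M ⊕ c.out, sumStructure M instM c.out, hM.sumStructure M instM c.out,
    by simp [Cardinal.mk_out], _, realizeP_comp_embedding (inlEmbedding M instM c.out) hφ hv⟩
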